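/- K(sin(π/12)) = ½·√(π/√3)·Γ(1/3)/Γ(5/6). -/

import Mathlib

/-!
Euler's Beta integral gives `Γ(1/6) Γ(1/2) / Γ(2/3) = ∫₀¹ t^(-5/6) (1 - t)^(-1/2) dt`,
and the substitution `t = x⁻³` turns it into `∫₁^∞ 3 dx / √(x³ - 1)`.
With `x = 1 + √3 tan²(φ/2)` and `u = tan(φ/2)` one has `x³ - 1 = 3√3 u² (u⁴ + √3 u² + 1)` and
`1 - sin²(π/12) sin²φ = (u⁴ + √3 u² + 1) / (1 + u²)²`, so the integral becomes
`√(3√3) ∫₀^π dφ / √(1 - sin²(π/12) sin²φ) = 2 √(3√3) K(sin(π/12))`.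
The reflection formula at `1/6` and `1/3` rewrites the Gamma quotient as
`√3 √π Γ(1/3) / Γ(5/6)`.
-/

open Real MeasureTheory Set

theorem integral_Ioo_rpow_mul_one_sub_rpow {a b : ℝ} (ha : 0 < a) (hb : 0 < b) :
    ∫ t in Ioo (0:ℝ) 1, t ^ (a - 1) * (1 - t) ^ (b - 1) =
      Gamma a * Gamma b / Gamma (a + b) := by
  have hbeta : Complex.betaIntegral a b =
      ↑(∫ t in Ioo (0:ℝ) 1, t ^ (a - 1) * (1 - t) ^ (b - 1)) := by
    rw [Complex.betaIntegral, intervalIntegral.integral_of_le zero_le_one,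
      integral_Ioc_eq_integral_Ioo, ← integral_complex_ofReal]
    refine setIntegral_congr_fun measurableSet_Ioo fun t ⟨ht0, ht1⟩ ↦ ?_
    push_cast
    rw [Complex.ofReal_cpow ht0.le, Complex.ofReal_cpow (sub_nonneg.2 ht1.le)]
    push_cast
    ring_nf
  have h := Complex.Gamma_mul_Gamma_eq_betaIntegral (s := a) (t := b) (by simpa) (by simpa)
  rw [hbeta, ← Complex.ofReal_add, Complex.Gamma_ofReal, Complex.Gamma_ofReal,
    Complex.Gamma_ofReal] at h
  rw [eq_div_iff (Gamma_pos_of_pos (add_pos ha hb)).ne', mul_comm]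
  exact_mod_cast h.symm

theorem integral_Ioo_zero_one_eq_integral_Ioi_one_comp_inv_pow (f : ℝ → ℝ) {n : ℕ}
    (hn : n ≠ 0) :
    ∫ t in Ioo (0:ℝ) 1, f t = ∫ x in Ioi (1:ℝ), n / x ^ (n + 1) * f (x ^ n)⁻¹ := by
  have himage : (fun x : ℝ ↦ (x ^ n)⁻¹) '' Ioi 1 = Ioo 0 1 := by
    ext t
    constructor
    · rintro ⟨x, hx, rfl⟩
      have : (0:ℝ) < x := one_pos.trans hx
      exact ⟨by positivity, inv_lt_one_of_one_lt₀ (one_lt_pow₀ hx hn)⟩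
    · rintro ⟨ht0, ht1⟩
      have hneg : -(n:ℝ)⁻¹ < 0 := by simp; positivity
      refine ⟨t ^ (-(n:ℝ)⁻¹), one_lt_rpow_of_pos_of_lt_one_of_neg ht0 ht1 hneg, ?_⟩
      simp only
      rw [← rpow_natCast, ← rpow_mul ht0.le, neg_mul, inv_mul_cancel₀ (by exact_mod_cast hn),
        rpow_neg_one, inv_inv]
  have hinj : InjOn (fun x : ℝ ↦ (x ^ n)⁻¹) (Ioi 1) := fun x hx y hy h ↦
    (pow_left_inj₀ (zero_le_one.trans hx.le) (zero_le_one.trans hy.le) hn).1 (inv_injective h)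
  have hderiv : ∀ x ∈ Ioi (1:ℝ),
      HasDerivWithinAt (fun x : ℝ ↦ (x ^ n)⁻¹) (-(n / x ^ (n + 1))) (Ioi 1) x := by
    intro x hx
    have hx0 : x ≠ 0 := (one_pos.trans hx).ne'
    refine (((hasDerivAt_pow n x).inv (pow_ne_zero n hx0)).congr_deriv ?_).hasDerivWithinAt
    obtain ⟨m, rfl⟩ := Nat.exists_eq_add_one_of_ne_zero hn
    field_simp
    simp only [Nat.add_sub_cancel]
    ring
  rw [← himage, integral_image_eq_integral_abs_deriv_smul measurableSet_Ioi hderiv hinj]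
  refine setIntegral_congr_fun measurableSet_Ioi fun x hx ↦ ?_
  have : (0:ℝ) < x := one_pos.trans hx
  rw [abs_neg, abs_of_pos (by positivity), smul_eq_mul]

theorem integral_zero_pi_comp_sin (f : ℝ → ℝ)
    (hf : IntervalIntegrable (fun x ↦ f (sin x)) volume 0 π) :
    ∫ x in (0:ℝ)..π, f (sin x) = 2 * ∫ x in (0:ℝ)..(π / 2), f (sin x) := by
  have hmid : π / 2 ∈ uIcc 0 π := by
    rw [uIcc_of_le pi_pos.le]; constructor <;> linarith [pi_pos]
  have hreflect : ∫ x in (π / 2)..π, f (sin x) = ∫ x in (0:ℝ)..(π / 2), f (sin x) := by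
    simpa [sin_pi_sub, show π - π / 2 = π / 2 by ring] using
      (intervalIntegral.integral_comp_sub_left (fun x ↦ f (sin x)) π (a := 0) (b := π / 2)).symm
  rw [← intervalIntegral.integral_add_adjacent_intervals
    (hf.mono_set (uIcc_subset_uIcc_left hmid)) (hf.mono_set (uIcc_subset_uIcc_right hmid)),
    hreflect]
  ring

theorem continuous_one_div_sqrt_one_sub_mul_sin_sq {m : ℝ} (hm : m < 1) :
    Continuous fun φ ↦ 1 / √(1 - m * sin φ ^ 2) := by
  refine continuous_const.div (by fun_prop) fun φ ↦ (sqrt_pos.2 ?_).ne'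
  rcases le_or_gt 0 m with hm0 | hm0
  · nlinarith [mul_le_mul_of_nonneg_left (sin_sq_le_one φ) hm0]
  · nlinarith [sq_nonneg (sin φ)]

theorem sin_pi_div_twelve_sq : sin (π / 12) ^ 2 = (2 - √3) / 4 := by
  rw [sin_sq_eq_half_sub, show 2 * (π / 12) = π / 6 by ring, cos_pi_div_six]
  ring

noncomputable def legendreSubst (φ : ℝ) : ℝ := 1 + √3 * tan (φ / 2) ^ 2

section legendreSubst

variable {φ : ℝ}

lemma tan_half_pos_of_mem_Ioo (hφ : φ ∈ Ioo 0 π) : 0 < tan (φ / 2) :=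
  tan_pos_of_pos_of_lt_pi_div_two (by linarith [hφ.1]) (by linarith [hφ.2])

lemma cos_half_pos_of_mem_Ioo (hφ : φ ∈ Ioo 0 π) : 0 < cos (φ / 2) :=
  cos_pos_of_mem_Ioo ⟨by linarith [hφ.1, pi_pos], by linarith [hφ.2]⟩

theorem image_legendreSubst : legendreSubst '' Ioo 0 π = Ioi 1 := by
  ext x
  constructor
  · rintro ⟨φ, hφ, rfl⟩
    have := tan_half_pos_of_mem_Ioo hφ
    simp only [legendreSubst, mem_Ioi, lt_add_iff_pos_right]
    positivity
  · intro hx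
    have hu : 0 < (x - 1) / √3 := div_pos (sub_pos.2 hx) (by positivity)
    have harctan : 0 < arctan √((x - 1) / √3) := by
      rw [arctan_pos]; positivity
    refine ⟨2 * arctan √((x - 1) / √3), ⟨by positivity, ?_⟩, ?_⟩
    · linarith [arctan_lt_pi_div_two √((x - 1) / √3)]
    · rw [legendreSubst, mul_div_cancel_left₀ _ two_ne_zero, tan_arctan, sq_sqrt hu.le]
      field_simp
      ring

theorem injOn_legendreSubst : InjOn legendreSubst (Ioo 0 π) := by
  intro φ hφ ψ hψ h
  have hsq : tan (φ / 2) ^ 2 = tan (ψ / 2) ^ 2 := by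
    simpa [legendreSubst] using h
  have htan := (pow_left_inj₀ (tan_half_pos_of_mem_Ioo hφ).le (tan_half_pos_of_mem_Ioo hψ).le
    two_ne_zero).1 hsq
  have := injOn_tan ⟨by linarith [hφ.1, pi_pos], by linarith [hφ.2]⟩
    ⟨by linarith [hψ.1, pi_pos], by linarith [hψ.2]⟩ htan
  linarith

theorem hasDerivAt_legendreSubst (hφ : cos (φ / 2) ≠ 0) :
    HasDerivAt legendreSubst (√3 * tan (φ / 2) * (1 + tan (φ / 2) ^ 2)) φ := by
  have hhalf : HasDerivAt (fun φ : ℝ ↦ φ / 2) (1 / 2) φ := (hasDerivAt_id' φ).div_const 2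
  have htan : HasDerivAt (fun φ ↦ tan (φ / 2)) (1 / cos (φ / 2) ^ 2 * (1 / 2)) φ :=
    (hasDerivAt_tan hφ).comp (h := fun φ ↦ φ / 2) φ hhalf
  refine (((htan.pow 2).const_mul √3).const_add 1).congr_deriv ?_
  rw [← inv_one_add_tan_sq hφ]
  field_simp
  ring

theorem legendreSubst_pow_three_sub_one :
    legendreSubst φ ^ 3 - 1 =
      3 * √3 * (tan (φ / 2) ^ 2 * (tan (φ / 2) ^ 4 + √3 * tan (φ / 2) ^ 2 + 1)) := by
  have h3 : √3 ^ 2 = 3 := sq_sqrt (by norm_num)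
  rw [legendreSubst]
  linear_combination (√3 * tan (φ / 2) ^ 6) * h3

theorem one_sub_sin_pi_div_twelve_sq_mul_sin_sq (hφ : cos (φ / 2) ≠ 0) :
    1 - sin (π / 12) ^ 2 * sin φ ^ 2 =
      (tan (φ / 2) ^ 4 + √3 * tan (φ / 2) ^ 2 + 1) / (1 + tan (φ / 2) ^ 2) ^ 2 := by
  have hsin : sin φ = 2 * sin (φ / 2) * cos (φ / 2) := by
    rw [← sin_two_mul]; ring_nf
  rw [sin_pi_div_twelve_sq, hsin, tan_eq_sin_div_cos]
  field_simp
  linear_combination (-4 * (2 - √3) * sin (φ / 2) ^ 2 * cos (φ / 2) ^ 2 *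
    (sin (φ / 2) ^ 2 + cos (φ / 2) ^ 2 + 1)) * sin_sq_add_cos_sq (φ / 2)

theorem abs_deriv_legendreSubst_mul_three_div_sqrt (hφ : φ ∈ Ioo 0 π) :
    |√3 * tan (φ / 2) * (1 + tan (φ / 2) ^ 2)| * (3 / √(legendreSubst φ ^ 3 - 1)) =
      √(3 * √3) / √(1 - sin (π / 12) ^ 2 * sin φ ^ 2) := by
  have ht := tan_half_pos_of_mem_Ioo hφ
  have hP : 0 < tan (φ / 2) ^ 4 + √3 * tan (φ / 2) ^ 2 + 1 := by positivity
  rw [legendreSubst_pow_three_sub_one,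
    one_sub_sin_pi_div_twelve_sq_mul_sin_sq (cos_half_pos_of_mem_Ioo hφ).ne',
    sqrt_mul (x := 3 * √3) (by positivity), sqrt_mul (sq_nonneg _), sqrt_sq ht.le,
    sqrt_div hP.le, sqrt_sq (by positivity), abs_of_pos (by positivity)]
  have := sqrt_pos.2 hP
  have : 0 < √(3 * √3) := sqrt_pos.2 (by positivity)
  field_simp
  exact (sq_sqrt (by positivity)).symm

end legendreSubst

theorem integral_Ioi_one_three_div_sqrt_cube_sub_one_eq_legendre :
    ∫ x in Ioi (1:ℝ), 3 / √(x ^ 3 - 1) =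
      √(3 * √3) * ∫ φ in (0:ℝ)..π, 1 / √(1 - sin (π / 12) ^ 2 * sin φ ^ 2) := by
  rw [← image_legendreSubst, integral_image_eq_integral_abs_deriv_smul measurableSet_Ioo
    (fun φ hφ ↦ (hasDerivAt_legendreSubst (cos_half_pos_of_mem_Ioo hφ).ne').hasDerivWithinAt)
    injOn_legendreSubst, intervalIntegral.integral_of_le pi_pos.le,
    integral_Ioc_eq_integral_Ioo, ← integral_const_mul]
  refine setIntegral_congr_fun measurableSet_Ioo fun φ hφ ↦ ?_
  rw [smul_eq_mul, abs_deriv_legendreSubst_mul_three_div_sqrt hφ, mul_one_div]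

theorem integral_Ioi_one_three_div_sqrt_cube_sub_one_eq_Gamma :
    ∫ x in Ioi (1:ℝ), 3 / √(x ^ 3 - 1) = Gamma (1 / 6) * Gamma (1 / 2) / Gamma (2 / 3) := by
  rw [show (2:ℝ) / 3 = 1 / 6 + 1 / 2 by norm_num,
    ← integral_Ioo_rpow_mul_one_sub_rpow (by norm_num) (by norm_num),
    integral_Ioo_zero_one_eq_integral_Ioi_one_comp_inv_pow _ three_ne_zero]
  refine setIntegral_congr_fun measurableSet_Ioi fun x (hx : 1 < x) ↦ ?_
  have hx0 : 0 < x := one_pos.trans hx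
  have hu : 0 < x ^ 3 := by positivity
  have hu1 : 0 < x ^ 3 - 1 := sub_pos.2 (one_lt_pow₀ hx three_ne_zero)
  have hleft : ((x ^ 3)⁻¹) ^ ((1:ℝ) / 6 - 1) = (x ^ 3) ^ ((5:ℝ) / 6) := by
    rw [inv_rpow hu.le, ← rpow_neg hu.le]
    norm_num
  have hright :
      (1 - (x ^ 3)⁻¹) ^ ((1:ℝ) / 2 - 1) = (x ^ 3) ^ ((1:ℝ) / 2) / √(x ^ 3 - 1) := by
    have hv : 0 < 1 - (x ^ 3)⁻¹ :=
      sub_pos.2 (inv_lt_one_of_one_lt₀ (one_lt_pow₀ hx three_ne_zero))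
    rw [show (1:ℝ) / 2 - 1 = -(1 / 2) by norm_num, rpow_neg hv.le, ← inv_rpow hv.le,
      show (1 - (x ^ 3)⁻¹)⁻¹ = x ^ 3 / (x ^ 3 - 1) by field_simp, div_rpow hu.le hu1.le,
      ← sqrt_eq_rpow (x ^ 3 - 1)]
  have hpow : (x ^ 3) ^ ((5:ℝ) / 6) * (x ^ 3) ^ ((1:ℝ) / 2) = x ^ 4 := by
    rw [← rpow_add hu, ← rpow_natCast x 3, ← rpow_mul hx0.le]
    norm_num
  rw [hleft, hright, ← mul_div_assoc, hpow]
  field_simp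
  ring

theorem Gamma_one_sixth_mul_Gamma_one_half_div_Gamma_two_thirds :
    Gamma (1 / 6) * Gamma (1 / 2) / Gamma (2 / 3) =
      √3 * √π * (Gamma (1 / 3) / Gamma (5 / 6)) := by
  have h16 : Gamma (1 / 6) * Gamma (5 / 6) = 2 * π := by
    rw [show (5:ℝ) / 6 = 1 - 1 / 6 by norm_num, Gamma_mul_Gamma_one_sub,
      show π * (1 / 6) = π / 6 by ring, sin_pi_div_six]
    ring
  have h13 : √3 * (Gamma (1 / 3) * Gamma (2 / 3)) = 2 * π := by
    rw [show (2:ℝ) / 3 = 1 - 1 / 3 by norm_num, Gamma_mul_Gamma_one_sub,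
      show π * (1 / 3) = π / 3 by ring, sin_pi_div_three]
    field_simp
  have : 0 < Gamma (5 / 6) := Gamma_pos_of_pos (by norm_num)
  have : 0 < Gamma (2 / 3) := Gamma_pos_of_pos (by norm_num)
  rw [Gamma_one_half_eq]
  field_simp
  linear_combination h16 - h13

theorem K_sin15_gamma' :
    ∫ θ in (0:ℝ)..(π/2),
        1 / Real.sqrt (1 - (Real.sin (π/12))^2 * Real.sin θ ^ 2)
      = (1/2) * Real.sqrt (π / Real.sqrt 3) *
          (Real.Gamma (1/3) / Real.Gamma (5/6)) := by
  have hk : sin (π / 12) ^ 2 < 1 := by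
    rw [sin_pi_div_twelve_sq]; linarith [sqrt_nonneg 3]
  have hsym := integral_zero_pi_comp_sin (fun s ↦ 1 / √(1 - sin (π / 12) ^ 2 * s ^ 2))
    ((continuous_one_div_sqrt_one_sub_mul_sin_sq hk).intervalIntegrable 0 π)
  beta_reduce at hsym
  have hK := integral_Ioi_one_three_div_sqrt_cube_sub_one_eq_Gamma
  rw [integral_Ioi_one_three_div_sqrt_cube_sub_one_eq_legendre, hsym,
    Gamma_one_sixth_mul_Gamma_one_half_div_Gamma_two_thirds] at hK
  have hsqrt : √(3 * √3) * √(π / √3) = √3 * √π := by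
    rw [← sqrt_mul (by positivity), ← sqrt_mul (by norm_num)]
    congr 1
    field_simp
  have hpos : 0 < √(3 * √3) := sqrt_pos.2 (by positivity)
  apply mul_left_cancel₀ (mul_ne_zero hpos.ne' two_ne_zero)
  linear_combination hK - Gamma (1 / 3) / Gamma (5 / 6) * hsqrt
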